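/- Let A be a (not necessarily unital) associative algebra, n ≥ 2, satisfying the identity a_1 a_2 ⋯ a_{n−1} a_n = a_n a_2 ⋯ a_{n−1} a_1 (swap of first and last factors). Then A is eventually commutative of degree n+1: for all τ ∈ S_{n+1} and all a_1,...,a_{n+1} ∈ A, a_1⋯a_{n+1} = a_{τ(1)}⋯a_{τ(n+1)}. -/

import Mathlib

/-- Product of a nonempty list in a (non-unital) multiplicative structure;
junk value `0` for the empty list. -/
def listMul {A : Type*} [Mul A] [Zero A] : List A → A
  | [] => 0
  | [x] => x
  | x :: y :: l => x * listMul (y :: l)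

/-- The product `a 0 * a 1 * ⋯ * a (k-1)`. -/
def finProd {A : Type*} [Mul A] [Zero A] {k : ℕ} (a : Fin k → A) : A :=
  listMul (List.ofFn a)

/-!
Write `n = m + 2`. Grouping two adjacent factors into one turns a product of `m + 3` factors into
one of `m + 2`, to which the identity applies; so does cutting off the last factor. Combining
these, a product of `m + 3` factors is invariant under moving its first factor to the end and
under exchanging its first two factors, and these two moves generate all rearrangements.
-/

section PermInvariance

variable {α β : Type*} {f : List α → β} {N : ℕ}

theorem apply_append_comm_of_rotate (hrot : ∀ x l, l.length + 1 = N → f (x :: l) = f (l ++ [x]))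
    (p q : List α) (hpq : p.length + q.length = N) : f (p ++ q) = f (q ++ p) := by
  induction p generalizing q with
  | nil => simp
  | cons x p ih =>
    have hlen : p.length + (q ++ [x]).length = N := by simp at hpq ⊢; omega
    calc f (x :: p ++ q) = f (p ++ q ++ [x]) := hrot x _ (by simp at hpq ⊢; omega)
      _ = f (p ++ (q ++ [x])) := by rw [List.append_assoc]
      _ = f (q ++ x :: p) := by rw [ih _ hlen, List.append_assoc, List.singleton_append]

theorem apply_eq_of_perm_of_rotate_of_swap
    (hrot : ∀ x l, l.length + 1 = N → f (x :: l) = f (l ++ [x]))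
    (hswap : ∀ x y l, l.length + 2 = N → f (x :: y :: l) = f (y :: x :: l))
    {l₁ l₂ : List α} (h : l₁.Perm l₂) (hl : l₁.length = N) : f l₁ = f l₂ := by
  suffices ∀ p : List α, p.length + l₁.length = N → f (p ++ l₁) = f (p ++ l₂) by
    simpa using this [] (by simpa using hl)
  clear hl
  induction h with
  | nil => intro p _; rfl
  | cons x _ ih =>
    intro p hp
    simpa using ih (p ++ [x]) (by simp at hp ⊢; omega)
  | swap x y l =>
    intro p hp
    have hlen : ∀ u : List α, u.length = l.length + 2 → p.length + u.length = N := by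
      intro u hu; simp at hp; omega
    rw [apply_append_comm_of_rotate hrot _ _ (hlen _ rfl),
      apply_append_comm_of_rotate hrot p _ (hlen _ rfl)]
    exact hswap y x (l ++ p) (by simp at hp ⊢; omega)
  | trans h₁₂ _ ih₁₂ ih₂₃ =>
    intro p hp
    rw [ih₁₂ p hp, ih₂₃ p (h₁₂.length_eq ▸ hp)]

end PermInvariance

theorem listMul_cons_of_ne_nil {A : Type*} [Mul A] [Zero A] (x : A) {l : List A} (hl : l ≠ []) :
    listMul (x :: l) = x * listMul l := by
  cases l with
  | nil => contradiction
  | cons y l => rfl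

section ListMul

variable {A : Type*} [Semigroup A] [Zero A]

theorem listMul_append_singleton (x : A) {l : List A} (hl : l ≠ []) :
    listMul (l ++ [x]) = listMul l * x := by
  induction l with
  | nil => contradiction
  | cons y l ih =>
    rcases eq_or_ne l [] with rfl | hl
    · rfl
    · rw [List.cons_append, listMul_cons_of_ne_nil _ (by simp), ih hl,
        listMul_cons_of_ne_nil _ hl, mul_assoc]

theorem listMul_cons_cons_eq_mul_cons (x y : A) (l : List A) :
    listMul (x :: y :: l) = listMul (x * y :: l) := by
  cases l with
  | nil => rfl
  | cons z l => exact (mul_assoc x y _).symm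

theorem listMul_append_pair_eq_append_mul (x y : A) (l : List A) :
    listMul (l ++ [x, y]) = listMul (l ++ [x * y]) := by
  cases l with
  | nil => rfl
  | cons z l =>
    rw [show z :: l ++ [x, y] = (z :: l ++ [x]) ++ [y] by simp,
      listMul_append_singleton _ (by simp), listMul_append_singleton _ (by simp),
      listMul_append_singleton _ (by simp), mul_assoc]

end ListMul

/-- The identity of the transposition `(1 n)` in degree `n = m + 2`, indexed by the number `m` of
middle factors. -/
def EndSwapIdentity (A : Type*) [Mul A] [Zero A] (m : ℕ) : Prop :=
  ∀ (x y : A) (w : List A), w.length = m → listMul (x :: w ++ [y]) = listMul (y :: w ++ [x])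

namespace EndSwapIdentity

variable {A : Type*} [Semigroup A] [Zero A] {m : ℕ} (h : EndSwapIdentity A m)
include h

theorem append_right {x y b : A} {w : List A} (hw : w.length = m) :
    listMul (x :: w ++ [y, b]) = listMul (y :: w ++ [x, b]) := by
  have hsplit : ∀ u v : A, u :: w ++ [v, b] = (u :: w ++ [v]) ++ [b] := by simp
  rw [hsplit, listMul_append_singleton _ (by simp), h _ _ _ hw,
    ← listMul_append_singleton _ (by simp), ← hsplit]

theorem move_second_to_end {x b c : A} {w : List A} (hw : w.length = m) :
    listMul (x :: b :: w ++ [c]) = listMul (x :: w ++ [c, b]) := by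
  calc listMul (x :: b :: w ++ [c])
    _ = listMul (x * b :: w ++ [c]) := listMul_cons_cons_eq_mul_cons ..
    _ = listMul (c :: w ++ [x * b]) := h _ _ _ hw
    _ = listMul (c :: w ++ [x, b]) := (listMul_append_pair_eq_append_mul ..).symm
    _ = listMul (x :: w ++ [c, b]) := h.append_right hw

theorem succ : EndSwapIdentity A (m + 1) := by
  rintro x y (_ | ⟨b, w⟩) hw
  · simp at hw
  · have hw : w.length = m := by simpa using hw
    calc listMul (x :: (b :: w) ++ [y]) = listMul (x :: w ++ [y, b]) := h.move_second_to_end hw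
      _ = listMul (y :: w ++ [x, b]) := h.append_right hw
      _ = listMul (y :: b :: w ++ [x]) := (h.move_second_to_end hw).symm

theorem listMul_cons_eq_append_singleton (x : A) {l : List A} (hl : l.length = m + 2) :
    listMul (x :: l) = listMul (l ++ [x]) := by
  rcases l with _ | ⟨b, l⟩
  · simp at hl
  rcases l.eq_nil_or_concat with rfl | ⟨w, c, rfl⟩
  · simp at hl
  have hw : w.length = m := by simpa using hl
  rw [List.concat_eq_append]
  calc listMul (x :: (b :: w ++ [c])) = listMul (x :: w ++ [c, b]) := h.move_second_to_end hw
    _ = listMul (b :: w ++ [c] ++ [x]) := by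
      simpa using h.succ x b (w ++ [c]) (by simpa using hw)

theorem listMul_cons_cons_comm (x y : A) {u : List A} (hu : u.length = m + 1) :
    listMul (x :: y :: u) = listMul (y :: x :: u) :=
  calc listMul (x :: y :: u)
    _ = listMul (y :: u ++ [x]) := h.listMul_cons_eq_append_singleton x (by simpa)
    _ = listMul (x :: u ++ [y]) := h.succ _ _ _ hu
    _ = listMul (y :: x :: u) := (h.listMul_cons_eq_append_singleton y (by simpa)).symm

theorem listMul_eq_of_perm {l₁ l₂ : List A} (hperm : l₁.Perm l₂) (hl : l₁.length = m + 3) :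
    listMul l₁ = listMul l₂ :=
  apply_eq_of_perm_of_rotate_of_swap
    (fun x _ hlen => h.listMul_cons_eq_append_singleton x (by omega))
    (fun x y _ hlen => h.listMul_cons_cons_comm x y (by omega)) hperm hl

end EndSwapIdentity

section FinTuples

variable {α : Type*} {m : ℕ}

theorem ofFn_cons_snoc (x y : α) (v : Fin m → α) :
    List.ofFn (Fin.cons x (Fin.snoc v y) : Fin (m + 2) → α) = x :: List.ofFn v ++ [y] := by
  rw [List.ofFn_cons, List.ofFn_succ']
  simp

theorem cons_snoc_comp_swap (x y : α) (v : Fin m → α) :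
    (Fin.cons x (Fin.snoc v y) : Fin (m + 2) → α) ∘ Equiv.swap 0 (Fin.last (m + 1)) =
      Fin.cons y (Fin.snoc v x) := by
  funext i
  induction i using Fin.cases with
  | zero => simp
  | succ j =>
    induction j using Fin.lastCases with
    | last => simp [Fin.succ_last]
    | cast k =>
      rw [Function.comp_apply, Equiv.swap_apply_of_ne_of_ne (Fin.succ_ne_zero _)
        (by simp [← Fin.succ_last, Fin.castSucc_ne_last])]
      simp

end FinTuples

theorem endSwapIdentity_of_finProd {A : Type*} [Mul A] [Zero A] {m : ℕ}
    (hid : ∀ a : Fin (m + 2) → A,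
      finProd a = finProd (a ∘ Equiv.swap 0 (Fin.last (m + 1)))) :
    EndSwapIdentity A m := by
  rintro x y w rfl
  have key := hid (Fin.cons x (Fin.snoc w.get y))
  rwa [finProd, finProd, cons_snoc_comp_swap, ofFn_cons_snoc, ofFn_cons_snoc, List.ofFn_get] at key

theorem swap_first_last_eventually_commutative {A : Type*} [NonUnitalRing A]
    (n : ℕ) (hn : 2 ≤ n)
    (hid : ∀ a : Fin n → A, finProd a =
      finProd (fun i => a (Equiv.swap (⟨0, by omega⟩ : Fin n) ⟨n - 1, by omega⟩ i))) :
    ∀ τ : Equiv.Perm (Fin (n + 1)), ∀ a : Fin (n + 1) → A,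
      finProd a = finProd (fun i => a (τ i)) := by
  obtain ⟨m, rfl⟩ : ∃ m, n = m + 2 := ⟨n - 2, by omega⟩
  -- `⟨m + 2 - 1, _⟩` is definitionally `Fin.last (m + 1)`
  have hswap : EndSwapIdentity A m := endSwapIdentity_of_finProd hid
  intro τ a
  exact hswap.listMul_eq_of_perm (τ.ofFn_comp_perm a).symm (by simp)
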